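/- Let D_0 ≤ D_1 ≤ … ≤ D_{l−1} be the (nondecreasing) partial distance profile of an l×l invertible binary kernel K. If D_1 = 2, then D_i is even for all i ≥ 1. -/

import Mathlib

/-- Hamming distance from a vector `v` to a set (code) `C` in `𝔽₂ⁿ`. -/
noncomputable def distTo {n : ℕ} (C : Set (Fin n → ZMod 2)) (v : Fin n → ZMod 2) : ℕ :=
  sInf ((fun c => hammingDist v c) '' C)

/-- Minimum distance of a code: minimum Hamming weight of its nonzero elements. -/
noncomputable def minDist {n : ℕ} (C : Set (Fin n → ZMod 2)) : ℕ :=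
  sInf (hammingNorm '' (C \ {0}))

/-- The kernel code `C_K^{(φ)}`: the span of rows `φ, …, l−1` of `K`. -/
def kernelCode {l : ℕ} (K : Matrix (Fin l) (Fin l) (ZMod 2)) (φ : ℕ) :
    Submodule (ZMod 2) (Fin l → ZMod 2) :=
  Submodule.span (ZMod 2) {v | ∃ i : Fin l, φ ≤ (i : ℕ) ∧ v = K i}

/-- The `i`-th partial distance of `K`: distance from row `i` to the span of rows `i+1, …, l−1`. -/
noncomputable def PD {l : ℕ} (K : Matrix (Fin l) (Fin l) (ZMod 2)) (i : Fin l) : ℕ :=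
  distTo (kernelCode K ((i : ℕ) + 1) : Set (Fin l → ZMod 2)) (K i)

/-!
The leading row `K j` (`j ≥ φ`) of a nonzero word `v ∈ C_K^{(φ)}` satisfies `K j - v ∈ C_K^{(j+1)}`,
so `D_j ≤ wt v`; with a nondecreasing profile and `D_1 = 2`, the code `C = C_K^{(1)}` contains no
vector of weight one. Since `K` is invertible, `C` has codimension one, and a codimension-one binary
code without weight-one vectors lies in the even-weight code. For `i ≥ 1`, `D_i` is the weight of
`K i - c` for some `c ∈ C_K^{(i+1)} ⊆ C`, a word of `C`, hence even.
-/

open Finset Submodule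

lemma ZMod.two_cases : ∀ a : ZMod 2, a = 0 ∨ a = 1 := by
  decide

lemma hammingNorm_cast_zmod_two {ι : Type*} [Fintype ι] (w : ι → ZMod 2) :
    (hammingNorm w : ZMod 2) = ∑ i, w i := by
  rw [hammingNorm, card_filter]
  push_cast
  refine sum_congr rfl fun i _ => ?_
  rcases ZMod.two_cases (w i) with h | h <;> simp [h]

lemma hammingNorm_single_one {ι : Type*} [Fintype ι] [DecidableEq ι] (k : ι) :
    hammingNorm (Pi.single k 1 : ι → ZMod 2) = 1 := by
  rw [hammingNorm, card_eq_one]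
  exact ⟨k, by ext j; simp [Pi.single_apply]⟩

/-- All unit vectors lie in the one nontrivial coset `x + C`, so their differences lie in `C`. -/
lemma sum_eq_zero_of_mem_of_sup_span_singleton_eq_top {ι : Type*} [Fintype ι] [DecidableEq ι]
    {C : Submodule (ZMod 2) (ι → ZMod 2)} {x : ι → ZMod 2} (hCx : C ⊔ span (ZMod 2) {x} = ⊤)
    (hsingle : ∀ k, Pi.single k 1 ∉ C) {v : ι → ZMod 2} (hv : v ∈ C) : ∑ i, v i = 0 := by
  have sub_mem_of_not_mem : ∀ u, u ∉ C → u - x ∈ C := by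
    intro u hu
    obtain ⟨c, hc, y, hy, rfl⟩ := mem_sup.1 (hCx ▸ mem_top : u ∈ C ⊔ span (ZMod 2) {x})
    obtain ⟨a, rfl⟩ := mem_span_singleton.1 hy
    rcases ZMod.two_cases a with rfl | rfl
    · exact absurd (by simpa using hc) hu
    · simpa using hc
  have single_sub_mem (j k : ι) : Pi.single j 1 - Pi.single k 1 ∈ C := by
    simpa using sub_mem (sub_mem_of_not_mem _ (hsingle j)) (sub_mem_of_not_mem _ (hsingle k))
  have sum_smul_single_mem (k : ι) : (∑ i, v i) • Pi.single k (1 : ZMod 2) ∈ C := by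
    have hdecomp : (∑ i, v i) • Pi.single k (1 : ZMod 2)
        = v - ∑ j, v j • (Pi.single j 1 - Pi.single k 1) := by
      simp only [smul_sub, sum_sub_distrib, ← Pi.single_smul', smul_eq_mul, mul_one,
        univ_sum_single, sum_smul]
      abel
    rw [hdecomp]
    exact sub_mem hv (sum_mem fun j _ => smul_mem _ _ (single_sub_mem j k))
  by_contra hsum
  obtain ⟨k, -, -⟩ := exists_ne_zero_of_sum_ne_zero hsum
  have hone : ∑ i, v i = 1 := (ZMod.two_cases _).resolve_left hsum
  exact hsingle k (by simpa [hone] using sum_smul_single_mem k)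

lemma distTo_le_hammingDist {n : ℕ} {C : Set (Fin n → ZMod 2)} {v c : Fin n → ZMod 2}
    (hc : c ∈ C) : distTo C v ≤ hammingDist v c :=
  Nat.sInf_le ⟨c, hc, rfl⟩

lemma exists_hammingDist_eq_distTo {n : ℕ} {C : Set (Fin n → ZMod 2)} (hC : C.Nonempty)
    (v : Fin n → ZMod 2) : ∃ c ∈ C, hammingDist v c = distTo C v :=
  Nat.sInf_mem (hC.image _)

section KernelCode

variable {l : ℕ} (K : Matrix (Fin l) (Fin l) (ZMod 2))

lemma row_mem_kernelCode {φ : ℕ} {i : Fin l} (h : φ ≤ i) : K i ∈ kernelCode K φ :=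
  subset_span ⟨i, h, rfl⟩

lemma kernelCode_antitone : Antitone (kernelCode K) := fun _ _ h =>
  span_mono fun _ ⟨i, hi, hv⟩ => ⟨i, h.trans hi, hv⟩

lemma kernelCode_eq_bot {φ : ℕ} (h : l ≤ φ) : kernelCode K φ = ⊥ := by
  rw [kernelCode, span_eq_bot]
  rintro _ ⟨i, hi, -⟩
  omega

lemma kernelCode_eq_span_singleton_sup {φ : ℕ} (hφ : φ < l) :
    kernelCode K φ = span (ZMod 2) {K ⟨φ, hφ⟩} ⊔ kernelCode K (φ + 1) := by
  rw [kernelCode, kernelCode, ← span_union]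
  congr 1
  ext v
  simp only [Set.mem_ofPred_eq, Set.mem_union, Set.mem_singleton_iff]
  constructor
  · rintro ⟨i, hi, rfl⟩
    rcases hi.eq_or_lt with hi | hi
    · exact .inl (congrArg K (Fin.ext hi.symm))
    · exact .inr ⟨i, hi, rfl⟩
  · rintro (rfl | ⟨i, hi, rfl⟩)
    · exact ⟨_, le_rfl, rfl⟩
    · exact ⟨i, by omega, rfl⟩

lemma kernelCode_zero (hK : IsUnit K.det) : kernelCode K 0 = ⊤ := by
  have hrows : {v | ∃ i : Fin l, 0 ≤ (i : ℕ) ∧ v = K i} = Set.range K.row := by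
    ext v
    exact ⟨fun ⟨i, _, hi⟩ => ⟨i, hi.symm⟩, fun ⟨i, hi⟩ => ⟨i, Nat.zero_le _, hi.symm⟩⟩
  rw [kernelCode, hrows, ← range_vecMulLinear, LinearMap.range_eq_top]
  exact Matrix.vecMul_surjective_iff_isUnit.2 ((Matrix.isUnit_iff_isUnit_det K).2 hK)

lemma exists_sub_row_mem_kernelCode {v : Fin l → ZMod 2} (hv0 : v ≠ 0) {φ : ℕ}
    (hv : v ∈ kernelCode K φ) : ∃ i : Fin l, φ ≤ i ∧ v - K i ∈ kernelCode K (i + 1) := by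
  induction hn : l - φ generalizing φ with
  | zero =>
    exact absurd (by simpa [kernelCode_eq_bot K (Nat.sub_eq_zero_iff_le.1 hn)] using hv) hv0
  | succ n ih =>
    have hφ : φ < l := by omega
    obtain ⟨y, hy, w, hw, rfl⟩ := mem_sup.1 (kernelCode_eq_span_singleton_sup K hφ ▸ hv)
    obtain ⟨a, rfl⟩ := mem_span_singleton.1 hy
    rcases ZMod.two_cases a with rfl | rfl
    · obtain ⟨i, hi, hmem⟩ := ih (by simpa using hw) (by omega)
      exact ⟨i, by omega, hmem⟩
    · exact ⟨⟨φ, hφ⟩, le_rfl, by simpa using hw⟩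

lemma PD_le_hammingNorm_of_mem_kernelCode (hmono : Monotone (PD K)) (j : Fin l)
    {v : Fin l → ZMod 2} (hv : v ∈ kernelCode K j) (hv0 : v ≠ 0) : PD K j ≤ hammingNorm v := by
  obtain ⟨i, hji, hmem⟩ := exists_sub_row_mem_kernelCode K hv0 hv
  calc PD K j ≤ PD K i := hmono hji
    _ ≤ hammingDist (K i) (K i - v) := distTo_le_hammingDist (by simpa using neg_mem hmem)
    _ = hammingNorm v := by
      rw [hammingDist_comm, hammingDist_eq_hammingNorm, neg_sub, sub_add_cancel]

lemma sum_eq_zero_of_mem_kernelCode_one (hl : 1 < l) (hK : IsUnit K.det)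
    (hmono : Monotone (PD K)) (h1 : PD K ⟨1, hl⟩ = 2) {v : Fin l → ZMod 2}
    (hv : v ∈ kernelCode K 1) : ∑ i, v i = 0 := by
  have hsup : kernelCode K 1 ⊔ span (ZMod 2) {K ⟨0, by omega⟩} = ⊤ := by
    rw [sup_comm, ← kernelCode_eq_span_singleton_sup, kernelCode_zero K hK]
  refine sum_eq_zero_of_mem_of_sup_span_singleton_eq_top hsup (fun k hk => ?_) hv
  have := PD_le_hammingNorm_of_mem_kernelCode K hmono ⟨1, hl⟩ hk (by simp)
  rw [h1, hammingNorm_single_one] at this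
  omega

end KernelCode

theorem stmt_8 {l : ℕ} (hl : 1 < l) (K : Matrix (Fin l) (Fin l) (ZMod 2))
    (hK : IsUnit K.det)
    (hmono : ∀ i j : Fin l, i ≤ j → PD K i ≤ PD K j)
    (h1 : PD K ⟨1, hl⟩ = 2) :
    ∀ i : Fin l, 1 ≤ (i : ℕ) → Even (PD K i) := by
  intro i hi
  obtain ⟨c, hc, hdist⟩ :=
    exists_hammingDist_eq_distTo (C := kernelCode K (i + 1)) ⟨0, zero_mem _⟩ (K i)
  have hdiff : K i - c ∈ kernelCode K 1 :=
    sub_mem (row_mem_kernelCode K hi) (kernelCode_antitone K (by omega) hc)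
  rw [PD, ← hdist, hammingDist_comm, hammingDist_eq_hammingNorm, neg_add_eq_sub,
    ← ZMod.natCast_eq_zero_iff_even, hammingNorm_cast_zmod_two]
  exact sum_eq_zero_of_mem_kernelCode_one K hl hK hmono h1 hdiff
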